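/- arXiv:2303.09000 — 3 statements merged into one kernel-verified Lean document; each statement's English description precedes it below -/
import Mathlib

section
/- Let X be a spherical {10,4,2}-design on the unit sphere S³ ⊂ ℝ⁴. Then |X| ≥ 12. Moreover, |X| = 12 holds if and only if A(X) ⊆ {−1/2, 0, 1/2}, i.e., every inner product of two distinct points of X lies in {−1/2, 0, 1/2}. -/
noncomputable section

/-- Standard Euclidean inner product on `ℝ^d`. -/
def dotp {d : ℕ} (x y : Fin d → ℝ) : ℝ := ∑ i, x i * y i

/-- A polynomial in `d` real variables is harmonic if its Laplacian vanishes. -/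
def IsHarmonic {d : ℕ} (P : MvPolynomial (Fin d) ℝ) : Prop :=
  ∑ i, MvPolynomial.pderiv i (MvPolynomial.pderiv i P) = 0

/-- `X ⊆ S^{d-1}` is a spherical design of harmonic index `T`:
for every `ℓ ∈ T` and every homogeneous harmonic polynomial `P` of degree `ℓ`,
the sum of `P` over `X` vanishes. -/
def IsSphDesign {d : ℕ} (T : Set ℕ) (X : Set (Fin d → ℝ)) : Prop :=
  ∀ ℓ ∈ T, ∀ P : MvPolynomial (Fin d) ℝ, P.IsHomogeneous ℓ → IsHarmonic P →
    ∑ᶠ x ∈ X, MvPolynomial.eval x P = 0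

section SphAux
open MvPolynomial

def qq (y : Fin 4 → ℝ) : MvPolynomial (Fin 4) ℝ := ∑ i, X i * C (y i)
def rr : MvPolynomial (Fin 4) ℝ := ∑ i : Fin 4, X i * X i
lemma pderiv_qq (y : Fin 4 → ℝ) (i : Fin 4) : pderiv i (qq y) = C (y i) := by
  simp [qq, pderiv_X, Pi.single_apply]
lemma pderiv_rr (i : Fin 4) : pderiv i rr = 2 * X i := by
  simp [rr, pderiv_X, Pi.single_apply, Finset.sum_add_distrib, Finset.sum_ite_eq', two_mul]

lemma h0 (y : Fin 4 → ℝ) (a b : ℕ) (i : Fin 4) :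
    pderiv i (qq y ^ a * rr ^ b) =
      C (a:ℝ) * (qq y ^ (a-1) * rr ^ b * C (y i)) +
      C (2*(b:ℝ)) * (qq y ^ a * rr ^ (b-1) * X i) := by
  rw [Derivation.leibniz, Derivation.leibniz_pow, Derivation.leibniz_pow,
    pderiv_qq, pderiv_rr]
  simp only [smul_eq_mul, nsmul_eq_mul, smul_eq_C_mul, ← C_eq_coe_nat, map_mul, map_ofNat]
  push_cast
  ring

lemma sum_CC (y : Fin 4 → ℝ) (hy : ∑ i, y i * y i = 1) :
    ∑ i : Fin 4, (C (y i) * C (y i) : MvPolynomial (Fin 4) ℝ) = 1 := by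
  simp_rw [← C_mul, ← map_sum, hy, C_1]

lemma lap (y : Fin 4 → ℝ) (hy : ∑ i, y i * y i = 1) (a b : ℕ) :
    ∑ i : Fin 4, pderiv i (pderiv i (qq y ^ a * rr ^ b)) =
      C ((a:ℝ) * (↑(a-1))) * (qq y ^ (a-1-1) * rr ^ b) +
      C (4*(a:ℝ)*(b:ℝ)) * (qq y ^ (a-1) * rr ^ (b-1) * qq y) +
      C (4*(b:ℝ)*(↑(b-1))) * (qq y ^ a * rr ^ (b-1-1) * rr) +
      C (8*(b:ℝ)) * (qq y ^ a * rr ^ (b-1)) := by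
  have key : ∀ i : Fin 4, pderiv i (pderiv i (qq y ^ a * rr ^ b)) =
      C ((a:ℝ) * (↑(a-1))) * (qq y ^ (a-1-1) * rr ^ b) * (C (y i) * C (y i)) +
      C (4*(a:ℝ)*(b:ℝ)) * (qq y ^ (a-1) * rr ^ (b-1)) * (X i * C (y i)) +
      C (4*(b:ℝ)*(↑(b-1))) * (qq y ^ a * rr ^ (b-1-1)) * (X i * X i) +
      C (2*(b:ℝ)) * (qq y ^ a * rr ^ (b-1)) := by
    intro i
    rw [h0]
    simp only [map_add, pderiv_mul, pderiv_C, pderiv_pow, pderiv_qq, pderiv_rr,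
      zero_mul, mul_zero, zero_add, add_zero, pderiv_X, Pi.single_eq_same,
      smul_eq_mul, nsmul_eq_mul, ← C_eq_coe_nat, map_mul, map_ofNat,
      show (pderiv i) (2 : MvPolynomial (Fin 4) ℝ) = 0 from by
        rw [show (2:MvPolynomial (Fin 4) ℝ) = C 2 from (map_ofNat C 2).symm]; exact pderiv_C]
    ring
  rw [Finset.sum_congr rfl (fun i _ => key i)]
  simp only [Finset.sum_add_distrib, ← Finset.mul_sum, sum_CC y hy,
    Finset.sum_const, Finset.card_univ, Fintype.card_fin, nsmul_eq_mul]
  rw [show (∑ i : Fin 4, (X i * C (y i)) : MvPolynomial (Fin 4) ℝ) = qq y from rfl,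
      show (∑ i : Fin 4, (X i * X i) : MvPolynomial (Fin 4) ℝ) = rr from rfl]
  simp only [← C_eq_coe_nat, ← C_mul, mul_one, Nat.cast_ofNat]
  ring_nf
  rw [show (4:MvPolynomial (Fin 4) ℝ) = C (4:ℝ) from (map_ofNat C 4).symm]
  simp only [mul_assoc, ← C_mul]
  ring_nf

def dotp' {d : ℕ} (x y : Fin d → ℝ) : ℝ := ∑ i, x i * y i

def H2 (y : Fin 4 → ℝ) : MvPolynomial (Fin 4) ℝ :=
  C 4 * (qq y ^ 2 * rr ^ 0) - C 1 * (qq y ^ 0 * rr ^ 1)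
def H4 (y : Fin 4 → ℝ) : MvPolynomial (Fin 4) ℝ :=
  C 16 * (qq y ^ 4 * rr ^ 0) - C 12 * (qq y ^ 2 * rr ^ 1) + C 1 * (qq y ^ 0 * rr ^ 2)
def H10 (y : Fin 4 → ℝ) : MvPolynomial (Fin 4) ℝ :=
  C 1024 * (qq y ^ 10 * rr ^ 0) - C 2304 * (qq y ^ 8 * rr ^ 1) + C 1792 * (qq y ^ 6 * rr ^ 2)
  - C 560 * (qq y ^ 4 * rr ^ 3) + C 60 * (qq y ^ 2 * rr ^ 4) - C 1 * (qq y ^ 0 * rr ^ 5)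

section
variable (y : Fin 4 → ℝ) (hy : ∑ i, y i * y i = 1)
include hy

lemma l20 : ∑ i : Fin 4, pderiv i (pderiv i (qq y ^ 2 * rr ^ 0)) = 2 := by
  rw [lap y hy 2 0]; norm_num [map_ofNat]
lemma l01 : ∑ i : Fin 4, pderiv i (pderiv i (qq y ^ 0 * rr ^ 1)) = 8 := by
  rw [lap y hy 0 1]; norm_num [map_ofNat]
lemma l40 : ∑ i : Fin 4, pderiv i (pderiv i (qq y ^ 4 * rr ^ 0)) = 12 * qq y ^ 2 := by
  rw [lap y hy 4 0]; norm_num [map_ofNat]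
lemma l21 : ∑ i : Fin 4, pderiv i (pderiv i (qq y ^ 2 * rr ^ 1)) = 2 * rr + 16 * qq y ^ 2 := by
  rw [lap y hy 2 1]; norm_num [map_ofNat]; ring
lemma l02 : ∑ i : Fin 4, pderiv i (pderiv i (qq y ^ 0 * rr ^ 2)) = 24 * rr := by
  rw [lap y hy 0 2]; norm_num [map_ofNat]; ring
lemma lA : ∑ i : Fin 4, pderiv i (pderiv i (qq y ^ 10 * rr ^ 0)) = 90 * qq y ^ 8 := by
  rw [lap y hy 10 0]; norm_num [map_ofNat]
lemma lB : ∑ i : Fin 4, pderiv i (pderiv i (qq y ^ 8 * rr ^ 1)) =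
    56 * (qq y ^ 6 * rr) + 40 * qq y ^ 8 := by
  rw [lap y hy 8 1]; norm_num [map_ofNat]; ring
lemma lC : ∑ i : Fin 4, pderiv i (pderiv i (qq y ^ 6 * rr ^ 2)) =
    30 * (qq y ^ 4 * rr ^ 2) + 72 * (qq y ^ 6 * rr) := by
  rw [lap y hy 6 2]; norm_num [map_ofNat]; ring
lemma lD : ∑ i : Fin 4, pderiv i (pderiv i (qq y ^ 4 * rr ^ 3)) =
    12 * (qq y ^ 2 * rr ^ 3) + 96 * (qq y ^ 4 * rr ^ 2) := by
  rw [lap y hy 4 3]; norm_num [map_ofNat]; ring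
lemma lE : ∑ i : Fin 4, pderiv i (pderiv i (qq y ^ 2 * rr ^ 4)) =
    2 * rr ^ 4 + 112 * (qq y ^ 2 * rr ^ 3) := by
  rw [lap y hy 2 4]; norm_num [map_ofNat]; ring
lemma lF : ∑ i : Fin 4, pderiv i (pderiv i (qq y ^ 0 * rr ^ 5)) = 120 * rr ^ 4 := by
  rw [lap y hy 0 5]; norm_num [map_ofNat]; ring

lemma harm2 : ∑ i : Fin 4, pderiv i (pderiv i (H2 y)) = 0 := by
  simp only [H2, map_sub, map_add, pderiv_C_mul, Finset.sum_sub_distrib,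
    Finset.sum_add_distrib, ← Finset.mul_sum]
  rw [l20 y hy, l01 y hy]
  simp only [map_ofNat, C_1]; ring

lemma harm4 : ∑ i : Fin 4, pderiv i (pderiv i (H4 y)) = 0 := by
  simp only [H4, map_sub, map_add, pderiv_C_mul, Finset.sum_sub_distrib,
    Finset.sum_add_distrib, ← Finset.mul_sum]
  rw [l40 y hy, l21 y hy, l02 y hy]
  simp only [map_ofNat, C_1]; ring

lemma harm10 : ∑ i : Fin 4, pderiv i (pderiv i (H10 y)) = 0 := by
  simp only [H10, map_sub, map_add, pderiv_C_mul, Finset.sum_sub_distrib,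
    Finset.sum_add_distrib, ← Finset.mul_sum]
  rw [lA y hy, lB y hy, lC y hy, lD y hy, lE y hy, lF y hy]
  simp only [map_ofNat, C_1]; ring

end

section
variable (y : Fin 4 → ℝ)

lemma hom_qq : (qq y).IsHomogeneous 1 := by
  apply MvPolynomial.IsHomogeneous.sum
  intro i _
  simpa using (isHomogeneous_X ℝ i).mul (isHomogeneous_C _ (y i))

lemma hom_rr : (rr : MvPolynomial (Fin 4) ℝ).IsHomogeneous 2 := by
  apply MvPolynomial.IsHomogeneous.sum
  intro i _
  simpa using (isHomogeneous_X ℝ i).mul (isHomogeneous_X ℝ i)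

lemma hom_qr (a b n : ℕ) (h : a + 2*b = n) (c : ℝ) :
    (C c * (qq y ^ a * rr ^ b)).IsHomogeneous n := by
  have := (isHomogeneous_C (Fin 4) c).mul (((hom_qq y).pow a).mul ((hom_rr).pow b))
  simpa [← h, mul_comm] using this

lemma hom2 : (H2 y).IsHomogeneous 2 := by
  apply MvPolynomial.IsHomogeneous.sub <;> apply hom_qr <;> norm_num

lemma hom4 : (H4 y).IsHomogeneous 4 := by
  apply MvPolynomial.IsHomogeneous.add
  apply MvPolynomial.IsHomogeneous.sub
  all_goals first
  | (apply hom_qr; norm_num)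
  | skip

lemma hom10 : (H10 y).IsHomogeneous 10 := by
  unfold H10
  repeat'
    first
    | apply MvPolynomial.IsHomogeneous.sub
    | apply MvPolynomial.IsHomogeneous.add
    | (apply hom_qr; norm_num)

lemma eval_qq (x : Fin 4 → ℝ) : eval x (qq y) = ∑ i, x i * y i := by
  simp [qq]

lemma eval_rr (x : Fin 4 → ℝ) : eval x rr = ∑ i, x i * x i := by
  simp [rr]

variable (x : Fin 4 → ℝ) (hx : ∑ i, x i * x i = 1)
include hx

lemma evalH2 : eval x (H2 y) = 4*(∑ i, x i * y i)^2 - 1 := by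
  simp [H2, eval_qq, eval_rr, hx]

lemma evalH4 : eval x (H4 y) = 16*(∑ i, x i * y i)^4 - 12*(∑ i, x i * y i)^2 + 1 := by
  simp [H4, eval_qq, eval_rr, hx]

lemma evalH10 : eval x (H10 y) = 1024*(∑ i, x i * y i)^10 - 2304*(∑ i, x i * y i)^8
    + 1792*(∑ i, x i * y i)^6 - 560*(∑ i, x i * y i)^4 + 60*(∑ i, x i * y i)^2 - 1 := by
  simp [H10, eval_qq, eval_rr, hx]

end

def GG (t : ℝ) : ℝ := 3 + 4*(4*t^2-1) + 2*(16*t^4-12*t^2+1)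
  + (1024*t^10-2304*t^8+1792*t^6-560*t^4+60*t^2-1)

lemma GG_eq (t : ℝ) : GG t = 4*t^2*(4*t^2-1)^2*((4*t^2-7/2)^2+3/4) := by
  unfold GG; ring

lemma GG_nonneg (t : ℝ) : 0 ≤ GG t := by
  rw [GG_eq]; positivity

lemma GG_one : GG 1 = 36 := by norm_num [GG]

lemma GG_zero_iff (t : ℝ) : GG t = 0 ↔ t = -1/2 ∨ t = 0 ∨ t = 1/2 := by
  constructor
  · intro h
    have h1 : (t*(2*t-1)*(2*t+1))^2 * (4*((4*t^2-7/2)^2+3/4)) = 0 := by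
      rw [GG_eq] at h; linear_combination h
    have h2 : (0:ℝ) < 4*((4*t^2-7/2)^2+3/4) := by positivity
    have h3 : t*(2*t-1)*(2*t+1) = 0 := by
      have := mul_eq_zero.mp h1
      rcases this with h | h
      · exact pow_eq_zero_iff (by norm_num) |>.mp h
      · linarith
    rcases mul_eq_zero.mp h3 with h4 | h4
    · rcases mul_eq_zero.mp h4 with h5 | h5
      · right; left; exact h5
      · right; right; linarith
    · left; linarith
  · rintro (h | h | h) <;> subst h <;> norm_num [GG]

end SphAux

open MvPolynomial in
theorem stmt_0 (X : Set (Fin 4 → ℝ)) (hfin : X.Finite) (hne : X.Nonempty)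
    (hsph : ∀ x ∈ X, dotp x x = 1)
    (hdes : IsSphDesign {10, 4, 2} X) :
    12 ≤ X.ncard ∧
      (X.ncard = 12 ↔
        ∀ x ∈ X, ∀ y ∈ X, x ≠ y → dotp x y ∈ ({-1/2, 0, 1/2} : Set ℝ)) := by
  classical
  set s : Finset (Fin 4 → ℝ) := hfin.toFinset with hs
  have hmem : ∀ z, z ∈ s ↔ z ∈ X := fun z => hfin.mem_toFinset
  have hcard : X.ncard = s.card := Set.ncard_eq_toFinset_card X hfin
  have hN : 0 < s.card := Finset.card_pos.mpr (by
    obtain ⟨z, hz⟩ := hne; exact ⟨z, (hmem z).mpr hz⟩)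
  set N := s.card with hNdef
  have hsph' : ∀ z ∈ s, ∑ i, z i * z i = 1 := by
    intro z hz; exact hsph z ((hmem z).mp hz)
  -- design sums
  have hdsum : ∀ (ℓ : ℕ), ℓ ∈ ({10,4,2} : Set ℕ) →
      ∀ P : MvPolynomial (Fin 4) ℝ, P.IsHomogeneous ℓ →
      (∑ i : Fin 4, MvPolynomial.pderiv i (MvPolynomial.pderiv i P) = 0) →
      ∑ x ∈ s, MvPolynomial.eval x P = 0 := by
    intro ℓ hℓ P hP hh
    have := hdes ℓ hℓ P hP hh
    rwa [← hfin.coe_toFinset, finsum_mem_coe_finset] at this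
  -- per-point sums
  have key : ∀ y ∈ s, ∑ x ∈ s, GG (dotp x y) = 3 * (N:ℝ) := by
    intro y hy
    have hy1 := hsph' y hy
    have e2 := hdsum 2 (by simp) (H2 y) (hom2 y) (harm2 y hy1)
    have e4 := hdsum 4 (by simp) (H4 y) (hom4 y) (harm4 y hy1)
    have e10 := hdsum 10 (by simp) (H10 y) (hom10 y) (harm10 y hy1)
    have hpt : ∀ x ∈ s, GG (dotp x y) =
        3 + (4 * MvPolynomial.eval x (H2 y) + (2 * MvPolynomial.eval x (H4 y)
          + MvPolynomial.eval x (H10 y))) := by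
      intro x hx
      rw [evalH2 y x (hsph' x hx), evalH4 y x (hsph' x hx), evalH10 y x (hsph' x hx)]
      unfold GG dotp
      ring
    rw [Finset.sum_congr rfl hpt]
    rw [Finset.sum_add_distrib, Finset.sum_add_distrib, Finset.sum_add_distrib,
      ← Finset.mul_sum, ← Finset.mul_sum, e2, e4, e10, Finset.sum_const]
    simp only [nsmul_eq_mul, mul_zero, add_zero, zero_add, mul_one]
    rw [hNdef]; ring
  -- double sum and diagonal split
  set S : ℝ := ∑ y ∈ s, ∑ x ∈ s.erase y, GG (dotp x y) with hSdef
  have hSnn : 0 ≤ S := by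
    apply Finset.sum_nonneg; intro y _
    apply Finset.sum_nonneg; intro x _
    exact GG_nonneg _
  have hsplit : ∀ y ∈ s, ∑ x ∈ s, GG (dotp x y) =
      36 + ∑ x ∈ s.erase y, GG (dotp x y) := by
    intro y hy
    rw [← Finset.add_sum_erase s _ hy]
    have : GG (dotp y y) = 36 := by
      have := hsph' y hy
      rw [show dotp y y = 1 from this, GG_one]
    rw [this]
  have main : 3 * (N:ℝ) * N = 36 * N + S := by
    have e1 : ∑ y ∈ s, ∑ x ∈ s, GG (dotp x y) = 3 * (N:ℝ) * N := by
      rw [Finset.sum_congr rfl key, Finset.sum_const]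
      push_cast; ring
    have e2 : ∑ y ∈ s, ∑ x ∈ s, GG (dotp x y) = 36 * (N:ℝ) + S := by
      rw [Finset.sum_congr rfl hsplit, Finset.sum_add_distrib, Finset.sum_const]
      push_cast; ring
    rw [← e1, e2]
  have hN1 : (1:ℝ) ≤ N := by exact_mod_cast hN
  have lower : 12 ≤ N := by
    have : (12:ℝ) ≤ N := by nlinarith
    exact_mod_cast this
  constructor
  · rwa [hcard]
  · rw [hcard]
    constructor
    · intro h12 x hx y hy hxy
      have hS0 : S = 0 := by
        have : (N:ℝ) = 12 := by exact_mod_cast h12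
        nlinarith
      have hterm : GG (dotp x y) = 0 := by
        have h2 := (Finset.sum_eq_zero_iff_of_nonneg
          (fun y _ => Finset.sum_nonneg (fun x _ => GG_nonneg _))).mp hS0
        have h3 := h2 y ((hmem y).mpr hy)
        have h4 := (Finset.sum_eq_zero_iff_of_nonneg
          (fun x _ => GG_nonneg _)).mp h3
        exact h4 x (Finset.mem_erase.mpr ⟨hxy, (hmem x).mpr hx⟩)
      have := (GG_zero_iff _).mp hterm
      simpa using this
    · intro hprod
      have hS0 : S = 0 := by
        apply Finset.sum_eq_zero; intro y hy
        apply Finset.sum_eq_zero; intro x hx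
        obtain ⟨hxny, hxs⟩ := Finset.mem_erase.mp hx
        have := hprod x ((hmem x).mp hxs) y ((hmem y).mp hy) hxny
        apply (GG_zero_iff _).mpr
        simpa using this
      have : (N:ℝ) = 12 := by
        rw [hS0] at main
        have hNpos : (0:ℝ) < N := by exact_mod_cast hN
        nlinarith
      exact_mod_cast this
end
end

section
/- Let X be a finite nonempty subset of the unit sphere S³ ⊂ ℝ⁴ such that A(X) ⊆ [−1/2, 1/2]. Then |X| ≤ 12. Moreover, |X| = 12 holds if and only if X is a spherical {10,4,2}-design and A(X) ⊆ {−1/2, 0, 1/2}. -/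
noncomputable section

/-
Delsarte's linear programming bound. For the Fischer inner product `⟨P, Q⟩ = ∑_α α! P_α Q_α`,
multiplication by `X i` is adjoint to `∂/∂X i`; hence multiplication by `‖x‖²` is adjoint to the
Laplacian, and `⟨P, ⟨x, y⟩ᵏ⟩ = k! P(y)` by Euler's identity when `P` is homogeneous of degree `k`.
Homogenizing the Chebyshev polynomial `U_k` (the zonal spherical function of degree `k` on `S³`)
gives a harmonic polynomial `Z_y` that reproduces `2ᵏ k! P(y)` on harmonic `P` of degree `k`, so
`∑_{x,y ∈ X} U_k(⟨x, y⟩) = ‖∑_{x ∈ X} Z_x‖² / (2ᵏ k!) ≥ 0`, with equality iff `X` annihilates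
the harmonic polynomials of degree `k`.

The polynomial `F = 16 + 30 U₂ + 15 U₄ + U₁₀ = 1024 t⁴ (t² - 1/4) ((t² - 1)² + 1/4)` is `≤ 0` on
`[-1/2, 1/2]` and `F(1) = 192`. Summing `F(⟨x, y⟩)` over `X × X` gives
`16 |X|² ≤ ∑ F(⟨x, y⟩) ≤ 192 |X|`, and `|X| = 12` forces equality in both steps: every
`U_k`-sum vanishes and every off-diagonal inner product is a root of `F` in `[-1/2, 1/2]`.
-/

open MvPolynomial Finset
open scoped Nat

lemma sum_sum_eq_sum_add_sum_sum_erase {α : Type*} [DecidableEq α] (s : Finset α)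
    (f : α → α → ℝ) :
    ∑ x ∈ s, ∑ y ∈ s, f x y = ∑ x ∈ s, f x x + ∑ x ∈ s, ∑ y ∈ s.erase x, f x y := by
  rw [← sum_add_distrib]
  exact sum_congr rfl fun x hx => (add_sum_erase s (f x) hx).symm

lemma sum_sum_erase_eq_zero_iff {α : Type*} [DecidableEq α] {s : Finset α} {f : α → α → ℝ}
    (hf : ∀ x ∈ s, ∀ y ∈ s, x ≠ y → f x y ≤ 0) :
    ∑ x ∈ s, ∑ y ∈ s.erase x, f x y = 0 ↔ ∀ x ∈ s, ∀ y ∈ s, x ≠ y → f x y = 0 := by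
  have hf' (x) (hx : x ∈ s) (y) (hy : y ∈ s.erase x) : f x y ≤ 0 :=
    hf x hx y (mem_of_mem_erase hy) (ne_of_mem_erase hy).symm
  rw [sum_eq_zero_iff_of_nonpos fun x hx => sum_nonpos (hf' x hx)]
  refine forall₂_congr fun x hx => ?_
  rw [sum_eq_zero_iff_of_nonpos (hf' x hx)]
  simp only [mem_erase]
  exact ⟨fun h y hy hxy => h y ⟨Ne.symm hxy, hy⟩, fun h y hy => h y hy.2 (Ne.symm hy.1)⟩

section Laplacian

variable {σ R : Type*} [Fintype σ] [CommRing R]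

def laplacian : MvPolynomial σ R →ₗ[R] MvPolynomial σ R :=
  ∑ i, (pderiv i).toLinearMap ∘ₗ (pderiv i).toLinearMap

lemma laplacian_apply (P : MvPolynomial σ R) : laplacian P = ∑ i, pderiv i (pderiv i P) := by
  simp [laplacian]

lemma laplacian_C_mul (c : R) (P : MvPolynomial σ R) : laplacian (C c * P) = C c * laplacian P := by
  simp [laplacian_apply, mul_sum]

lemma laplacian_mul (f g : MvPolynomial σ R) :
    laplacian (f * g) =
      laplacian f * g + 2 * ∑ i, pderiv i f * pderiv i g + f * laplacian g := by
  simp only [laplacian_apply, pderiv_mul, map_add, mul_sum, sum_mul, ← sum_add_distrib]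
  exact sum_congr rfl fun i _ => by ring

def dotPoly (y : σ → R) : MvPolynomial σ R := ∑ i, C (y i) * X i

def normSqPoly : MvPolynomial σ R := ∑ i, X i ^ 2

lemma pderiv_dotPoly (y : σ → R) (i : σ) : pderiv i (dotPoly y) = C (y i) := by
  classical
  simp [dotPoly, Pi.single_apply]

lemma pderiv_normSqPoly (i : σ) : pderiv i (normSqPoly : MvPolynomial σ R) = 2 * X i := by
  classical
  simp [normSqPoly, Pi.single_apply]

lemma isHomogeneous_dotPoly (y : σ → R) : (dotPoly y).IsHomogeneous 1 :=
  IsHomogeneous.sum _ _ _ fun i _ => isHomogeneous_C_mul_X (y i) i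

lemma isHomogeneous_normSqPoly : (normSqPoly : MvPolynomial σ R).IsHomogeneous 2 :=
  IsHomogeneous.sum _ _ _ fun i _ => isHomogeneous_X_pow i 2

lemma laplacian_dotPoly_pow (y : σ → R) (p : ℕ) :
    laplacian (dotPoly y ^ p) =
      ((p * (p - 1) : ℕ) : MvPolynomial σ R) * C (∑ i, y i ^ 2) * dotPoly y ^ (p - 2) := by
  simp only [laplacian_apply, pderiv_pow, pderiv_dotPoly, pderiv_mul, pderiv_C, mul_zero,
    add_zero, Derivation.map_natCast, zero_mul, zero_add, Nat.cast_mul, map_sum, map_pow, mul_sum,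
    sum_mul, Nat.sub_sub]
  exact sum_congr rfl fun i _ => by ring

lemma laplacian_normSqPoly_mul {F : MvPolynomial σ R} {n : ℕ} (hF : F.IsHomogeneous n) :
    laplacian (normSqPoly * F) =
      ((2 * Fintype.card σ + 4 * n : ℕ) : MvPolynomial σ R) * F + normSqPoly * laplacian F := by
  have hR : laplacian (normSqPoly : MvPolynomial σ R) = 2 * Fintype.card σ := by
    have h2 (i : σ) : pderiv i (2 * X i : MvPolynomial σ R) = 2 := by
      rw [← map_ofNat C 2, pderiv_C_mul, pderiv_X_self, mul_one]
    simp only [laplacian_apply, pderiv_normSqPoly, h2]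
    simp [mul_comm]
  have hE : ∑ i, pderiv i normSqPoly * pderiv i F = 2 * (n • F) := by
    simp only [pderiv_normSqPoly, mul_assoc, ← mul_sum, hF.sum_X_mul_pderiv]
  rw [laplacian_mul, hR, hE, nsmul_eq_mul]
  push_cast
  ring

lemma laplacian_normSqPoly_pow_succ_mul {F : MvPolynomial σ R} {n : ℕ} (hF : F.IsHomogeneous n)
    (j : ℕ) :
    laplacian (normSqPoly ^ (j + 1) * F) =
      ((2 * (j + 1) * (2 * n + 2 * j + Fintype.card σ) : ℕ) : MvPolynomial σ R) *
        normSqPoly ^ j * F + normSqPoly ^ (j + 1) * laplacian F := by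
  induction j with
  | zero =>
    rw [zero_add, pow_one, pow_zero, laplacian_normSqPoly_mul hF]
    push_cast
    ring
  | succ j ih =>
    have hRF : (normSqPoly ^ (j + 1) * F : MvPolynomial σ R).IsHomogeneous (2 * (j + 1) + n) :=
      (isHomogeneous_normSqPoly.pow _).mul hF
    rw [pow_succ', mul_assoc, laplacian_normSqPoly_mul hRF, ih]
    push_cast
    ring

-- The truncated exponents `j - 1` and `p - 2` only occur with a vanishing coefficient.
lemma laplacian_normSqPoly_pow_mul_dotPoly_pow (y : σ → R) (j p : ℕ) :
    laplacian (normSqPoly ^ j * dotPoly y ^ p) =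
      ((2 * j * (2 * p + 2 * (j - 1) + Fintype.card σ) : ℕ) : MvPolynomial σ R) *
          normSqPoly ^ (j - 1) * dotPoly y ^ p +
        ((p * (p - 1) : ℕ) : MvPolynomial σ R) * C (∑ i, y i ^ 2) * normSqPoly ^ j *
          dotPoly y ^ (p - 2) := by
  cases j with
  | zero => simp [laplacian_dotPoly_pow]
  | succ j =>
    rw [laplacian_normSqPoly_pow_succ_mul ((isHomogeneous_dotPoly y).pow p),
      laplacian_dotPoly_pow]
    simp only [Nat.add_sub_cancel, one_mul]
    ring

end Laplacian

lemma eval_eq_coeff_zero_of_isHomogeneous_zero {σ R : Type*} [CommSemiring R]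
    {P : MvPolynomial σ R} (hP : P.IsHomogeneous 0) (y : σ → R) : eval y P = coeff 0 P := by
  rw [totalDegree_eq_zero_iff_eq_C.mp (Nat.le_zero.mp hP.totalDegree_le), eval_C,
    coeff_zero_C]

section Fischer

variable {σ : Type*} [Fintype σ]

def fischerWeight (α : σ →₀ ℕ) : ℝ := ∏ i, ((α i)! : ℝ)

lemma fischerWeight_pos (α : σ →₀ ℕ) : 0 < fischerWeight α :=
  prod_pos fun i _ => mod_cast (α i).factorial_pos

lemma fischerWeight_add_single [DecidableEq σ] (α : σ →₀ ℕ) (i : σ) :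
    fischerWeight (α + Finsupp.single i 1) = fischerWeight α * (α i + 1) := by
  have h (j : σ) : (((α + Finsupp.single i 1 : σ →₀ ℕ) j)! : ℝ) =
      (α j)! * if j = i then (α j + 1 : ℝ) else 1 := by
    rcases eq_or_ne j i with rfl | hj
    · simp [Nat.factorial_succ, mul_comm]
    · simp [hj]
  simp only [fischerWeight, h, prod_mul_distrib, prod_ite_eq', mem_univ, if_true]

lemma sum_fischerWeight_of_support_subset {P : MvPolynomial σ ℝ} (Q : MvPolynomial σ ℝ)
    {s : Finset (σ →₀ ℕ)} (h : P.support ⊆ s) :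
    ∑ α ∈ s, fischerWeight α * coeff α P * coeff α Q =
      ∑ α ∈ P.support, fischerWeight α * coeff α P * coeff α Q :=
  (sum_subset h fun α _ hα => by simp [notMem_support_iff.mp hα]).symm

def fischerForm : MvPolynomial σ ℝ →ₗ[ℝ] MvPolynomial σ ℝ →ₗ[ℝ] ℝ :=
  LinearMap.mk₂ ℝ (fun P Q => ∑ α ∈ P.support, fischerWeight α * coeff α P * coeff α Q)
    (fun P₁ P₂ Q => by
      classical
      have h₁ : P₁.support ⊆ P₁.support ∪ P₂.support := subset_union_left
      have h₂ : P₂.support ⊆ P₁.support ∪ P₂.support := subset_union_right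
      rw [← sum_fischerWeight_of_support_subset Q (support_add (p := P₁) (q := P₂)),
        ← sum_fischerWeight_of_support_subset Q h₁, ← sum_fischerWeight_of_support_subset Q h₂,
        ← sum_add_distrib]
      exact sum_congr rfl fun α _ => by rw [coeff_add]; ring)
    (fun c P Q => by
      rw [smul_eq_mul, mul_sum,
        ← sum_fischerWeight_of_support_subset Q (support_smul (a := c) (f := P))]
      exact sum_congr rfl fun α _ => by rw [coeff_smul, smul_eq_mul]; ring)
    (fun P Q₁ Q₂ => by
      rw [← sum_add_distrib]
      exact sum_congr rfl fun α _ => by rw [coeff_add]; ring)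
    (fun c P Q => by
      rw [smul_eq_mul, mul_sum]
      exact sum_congr rfl fun α _ => by rw [coeff_smul, smul_eq_mul]; ring)

lemma fischerForm_apply (P Q : MvPolynomial σ ℝ) :
    fischerForm P Q = ∑ α ∈ P.support, fischerWeight α * coeff α P * coeff α Q := rfl

lemma fischerForm_comm (P Q : MvPolynomial σ ℝ) : fischerForm P Q = fischerForm Q P := by
  rw [fischerForm_apply, fischerForm_apply,
    ← sum_fischerWeight_of_support_subset Q (subset_union_left (s₂ := Q.support)),
    ← sum_fischerWeight_of_support_subset P (subset_union_right (s₁ := P.support))]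
  exact sum_congr rfl fun α _ => by ring

lemma fischerForm_self_nonneg (P : MvPolynomial σ ℝ) : 0 ≤ fischerForm P P :=
  sum_nonneg fun α _ => by
    rw [mul_assoc]; exact mul_nonneg (fischerWeight_pos α).le (mul_self_nonneg _)

lemma fischerForm_self_eq_zero {P : MvPolynomial σ ℝ} : fischerForm P P = 0 ↔ P = 0 := by
  refine ⟨fun h => ?_, fun h => by simp [h]⟩
  have hterm := (sum_eq_zero_iff_of_nonneg fun α _ => by
    rw [mul_assoc]; exact mul_nonneg (fischerWeight_pos α).le (mul_self_nonneg _)).mp h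
  by_contra hP
  obtain ⟨α, hα⟩ := support_nonempty.mpr hP
  have := hterm α hα
  rw [mul_assoc, mul_eq_zero, mul_self_eq_zero] at this
  exact this.elim (fischerWeight_pos α).ne' (mem_support_iff.mp hα)

lemma fischerForm_monomial_monomial [DecidableEq σ] (α β : σ →₀ ℕ) (a b : ℝ) :
    fischerForm (monomial α a) (monomial β b) = if α = β then fischerWeight α * a * b else 0 := by
  rcases eq_or_ne a 0 with rfl | ha
  · simp
  · rw [fischerForm_apply, support_monomial, if_neg ha, sum_singleton, coeff_monomial,
      coeff_monomial, if_pos rfl]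
    split_ifs <;> simp_all

lemma fischerForm_X_mul_monomial [DecidableEq σ] (i : σ) (α β : σ →₀ ℕ) (a b : ℝ) :
    fischerForm (monomial α a) (X i * monomial β b) =
      fischerForm (pderiv i (monomial α a)) (monomial β b) := by
  rw [X, monomial_mul, one_mul, pderiv_monomial, fischerForm_monomial_monomial,
    fischerForm_monomial_monomial]
  by_cases hα : α = β + Finsupp.single i 1
  · subst hα
    simp only [add_tsub_cancel_right, add_comm, if_true, fischerWeight_add_single,
      Finsupp.coe_add, Pi.add_apply, Finsupp.single_eq_same]
    push_cast
    ring
  · rw [if_neg (by rwa [add_comm] at hα)]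
    by_cases hi : α i = 0
    · simp [hi]
    · rw [if_neg]
      rintro rfl
      exact hα (Finsupp.sub_add_single_one_cancel hi).symm

theorem fischerForm_X_mul (i : σ) (P Q : MvPolynomial σ ℝ) :
    fischerForm P (X i * Q) = fischerForm (pderiv i P) Q := by
  classical
  induction P using MvPolynomial.induction_on' with
  | add P₁ P₂ h₁ h₂ => simp [h₁, h₂]
  | monomial α a =>
    induction Q using MvPolynomial.induction_on' with
    | add Q₁ Q₂ h₁ h₂ => simp [mul_add, h₁, h₂]
    | monomial β b => exact fischerForm_X_mul_monomial i α β a b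

lemma fischerForm_one (P : MvPolynomial σ ℝ) : fischerForm P 1 = coeff 0 P := by
  rw [fischerForm_comm, fischerForm_apply]
  simp [fischerWeight]

lemma fischerForm_normSqPoly_mul (P Q : MvPolynomial σ ℝ) :
    fischerForm P (normSqPoly * Q) = fischerForm (laplacian P) Q := by
  simp only [normSqPoly, sum_mul, sq, mul_assoc, map_sum, fischerForm_X_mul, laplacian_apply,
    LinearMap.sum_apply]

lemma fischerForm_normSqPoly_pow_mul_eq_zero {P : MvPolynomial σ ℝ} (hP : laplacian P = 0)
    {j : ℕ} (hj : j ≠ 0) (Q : MvPolynomial σ ℝ) : fischerForm P (normSqPoly ^ j * Q) = 0 := by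
  obtain ⟨j, rfl⟩ := Nat.exists_eq_succ_of_ne_zero hj
  rw [pow_succ', mul_assoc, fischerForm_normSqPoly_mul, hP, map_zero, LinearMap.zero_apply]

theorem fischerForm_dotPoly_pow (y : σ → ℝ) {k : ℕ} {P : MvPolynomial σ ℝ}
    (hP : P.IsHomogeneous k) : fischerForm P (dotPoly y ^ k) = k ! * eval y P := by
  induction k generalizing P with
  | zero =>
    rw [pow_zero, fischerForm_one, eval_eq_coeff_zero_of_isHomogeneous_zero hP, Nat.factorial_zero,
      Nat.cast_one, one_mul]
  | succ k ih =>
    have hEuler := congrArg (eval y) hP.sum_X_mul_pderiv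
    simp only [map_sum, map_mul, eval_X, nsmul_eq_mul, map_natCast] at hEuler
    have hterm (i : σ) : fischerForm P (C (y i) * X i * dotPoly y ^ k) =
        k ! * (y i * eval y (pderiv i P)) := by
      rw [mul_assoc, C_mul', map_smul, fischerForm_X_mul, ih (hP.pderiv), smul_eq_mul]
      ring
    have hsplit : dotPoly y ^ (k + 1) = ∑ i, C (y i) * X i * dotPoly y ^ k := by
      rw [pow_succ', dotPoly, sum_mul]
    rw [hsplit, map_sum]
    simp only [hterm, ← mul_sum, hEuler, Nat.factorial_succ]
    push_cast
    ring

end Fischer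

lemma isHarmonic_iff_laplacian_eq_zero {d : ℕ} (P : MvPolynomial (Fin d) ℝ) :
    IsHarmonic P ↔ laplacian P = 0 := by
  rw [laplacian_apply, IsHarmonic]

lemma eval_dotPoly {d : ℕ} (x y : Fin d → ℝ) : eval x (dotPoly y) = dotp x y := by
  simp [dotPoly, dotp, mul_comm]

lemma eval_normSqPoly {d : ℕ} (x : Fin d → ℝ) : eval x normSqPoly = dotp x x := by
  simp [normSqPoly, dotp, sq]

section Zonal

variable {d : ℕ} {k : ℕ}

def zonal (k : ℕ) (c : Fin (k / 2 + 1) → ℝ) (y : Fin d → ℝ) : MvPolynomial (Fin d) ℝ :=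
  ∑ j, C (c j) * (normSqPoly ^ (j : ℕ) * dotPoly y ^ (k - 2 * j))

def zonalProfile (k : ℕ) (c : Fin (k / 2 + 1) → ℝ) (t : ℝ) : ℝ :=
  ∑ j, c j * t ^ (k - 2 * j)

lemma isHomogeneous_zonal (c : Fin (k / 2 + 1) → ℝ) (y : Fin d → ℝ) :
    (zonal k c y).IsHomogeneous k :=
  IsHomogeneous.sum _ _ _ fun j _ => by
    have hj : 2 * (j : ℕ) ≤ k := by omega
    convert (isHomogeneous_C _ (c j)).mul ((isHomogeneous_normSqPoly.pow j).mul
      ((isHomogeneous_dotPoly y).pow (k - 2 * j))) using 1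
    omega

lemma eval_zonal (c : Fin (k / 2 + 1) → ℝ) {x : Fin d → ℝ} (hx : dotp x x = 1)
    (y : Fin d → ℝ) : eval x (zonal k c y) = zonalProfile k c (dotp x y) := by
  simp [zonal, zonalProfile, eval_dotPoly, eval_normSqPoly, hx]

lemma fischerForm_zonal (c : Fin (k / 2 + 1) → ℝ) {P : MvPolynomial (Fin d) ℝ}
    (hP : P.IsHomogeneous k) (hΔ : IsHarmonic P) (y : Fin d → ℝ) :
    fischerForm P (zonal k c y) = c 0 * k ! * eval y P := by
  rw [isHarmonic_iff_laplacian_eq_zero] at hΔ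
  have hterm (j : Fin (k / 2)) : fischerForm P (C (c j.succ) * (normSqPoly ^ (j.succ : ℕ) *
      dotPoly y ^ (k - 2 * j.succ))) = 0 := by
    rw [C_mul', map_smul, fischerForm_normSqPoly_pow_mul_eq_zero hΔ (by simp), smul_zero]
  rw [zonal, map_sum, Fin.sum_univ_succ, sum_eq_zero fun j _ => hterm j, add_zero]
  simp only [Fin.val_zero, pow_zero, one_mul, mul_zero, tsub_zero, C_mul', map_smul,
    fischerForm_dotPoly_pow y hP, smul_eq_mul, mul_assoc]

variable {c : Fin (k / 2 + 1) → ℝ} {s : Finset (Fin d → ℝ)}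

lemma fischerForm_sum_zonal (hharm : ∀ y : Fin d → ℝ, dotp y y = 1 → IsHarmonic (zonal k c y))
    (hs : ∀ x ∈ s, dotp x x = 1) :
    fischerForm (∑ x ∈ s, zonal k c x) (∑ y ∈ s, zonal k c y) =
      c 0 * k ! * ∑ x ∈ s, ∑ y ∈ s, zonalProfile k c (dotp x y) := by
  simp only [map_sum, LinearMap.sum_apply, mul_sum]
  refine sum_congr rfl fun x hx => sum_congr rfl fun y hy => ?_
  rw [fischerForm_zonal c (isHomogeneous_zonal c y) (hharm y (hs y hy)), eval_zonal c (hs x hx)]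

theorem sum_sum_zonalProfile_nonneg (hc : 0 < c 0)
    (hharm : ∀ y : Fin d → ℝ, dotp y y = 1 → IsHarmonic (zonal k c y))
    (hs : ∀ x ∈ s, dotp x x = 1) :
    0 ≤ ∑ x ∈ s, ∑ y ∈ s, zonalProfile k c (dotp x y) := by
  have h := fischerForm_self_nonneg (∑ x ∈ s, zonal k c x)
  rw [fischerForm_sum_zonal hharm hs] at h
  exact nonneg_of_mul_nonneg_right h (by positivity)

theorem sum_sum_zonalProfile_eq_zero_iff (hc : 0 < c 0)
    (hharm : ∀ y : Fin d → ℝ, dotp y y = 1 → IsHarmonic (zonal k c y))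
    (hs : ∀ x ∈ s, dotp x x = 1) :
    ∑ x ∈ s, ∑ y ∈ s, zonalProfile k c (dotp x y) = 0 ↔
      ∀ P : MvPolynomial (Fin d) ℝ, P.IsHomogeneous k → IsHarmonic P → ∑ x ∈ s, eval x P = 0 := by
  constructor
  · intro h P hP hΔ
    have hzero : ∑ x ∈ s, zonal k c x = 0 := by
      rw [← fischerForm_self_eq_zero, fischerForm_sum_zonal hharm hs, h, mul_zero]
    have := congrArg (fischerForm P) hzero
    simp only [map_sum, fischerForm_zonal c hP hΔ, ← mul_sum, map_zero] at this
    exact (mul_eq_zero.mp this).resolve_left (by positivity)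
  · intro h
    rw [sum_comm]
    refine sum_eq_zero fun y hy => ?_
    rw [← h _ (isHomogeneous_zonal c y) (hharm y (hs y hy))]
    exact sum_congr rfl fun x hx => (eval_zonal c (hs x hx) y).symm

end Zonal

def chebyshevUCoeff (k : ℕ) (j : Fin (k / 2 + 1)) : ℝ :=
  (-1) ^ (j : ℕ) * 2 ^ (k - 2 * j) * (k - j).choose j

lemma eval_chebyshevU_four (t : ℝ) :
    (Polynomial.Chebyshev.U ℝ 4).eval t = 16 * t ^ 4 - 12 * t ^ 2 + 1 := by
  open Polynomial.Chebyshev in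
  simp only [U_eq ℝ 4, U_eq ℝ 3, Int.reduceSub, U_two, U_one, Polynomial.eval_sub,
    Polynomial.eval_mul, Polynomial.eval_ofNat, Polynomial.eval_X, Polynomial.eval_pow,
    Polynomial.eval_one]
  ring

lemma eval_chebyshevU_ten (t : ℝ) :
    (Polynomial.Chebyshev.U ℝ 10).eval t =
      1024 * t ^ 10 - 2304 * t ^ 8 + 1792 * t ^ 6 - 560 * t ^ 4 + 60 * t ^ 2 - 1 := by
  open Polynomial.Chebyshev in
  simp only [U_eq ℝ 10, U_eq ℝ 9, U_eq ℝ 8, U_eq ℝ 7, U_eq ℝ 6, U_eq ℝ 5, U_eq ℝ 4, U_eq ℝ 3,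
    Int.reduceSub, U_two, U_one, Polynomial.eval_sub, Polynomial.eval_mul, Polynomial.eval_ofNat,
    Polynomial.eval_X, Polynomial.eval_pow, Polynomial.eval_one]
  ring

lemma zonalProfile_chebyshevUCoeff {k : ℕ} (hk : k ∈ ({10, 4, 2} : Set ℕ)) (t : ℝ) :
    zonalProfile k (chebyshevUCoeff k) t = (Polynomial.Chebyshev.U ℝ k).eval t := by
  rcases hk with rfl | rfl | rfl <;>
    simp [zonalProfile, chebyshevUCoeff, Fin.sum_univ_succ, eval_chebyshevU_ten,
      eval_chebyshevU_four, Polynomial.Chebyshev.U_two, Nat.choose] <;> ring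

lemma isHarmonic_zonal_chebyshevUCoeff {k : ℕ} (hk : k ∈ ({10, 4, 2} : Set ℕ)) {y : Fin 4 → ℝ}
    (hy : dotp y y = 1) : IsHarmonic (zonal k (chebyshevUCoeff k) y) := by
  have hy' : ∑ i, y i ^ 2 = 1 := by simpa [dotp, sq] using hy
  rw [isHarmonic_iff_laplacian_eq_zero]
  rcases hk with rfl | rfl | rfl <;>
  · simp only [zonal, Fin.sum_univ_succ, Fin.sum_univ_zero, map_add, laplacian_C_mul,
      laplacian_normSqPoly_pow_mul_dotPoly_pow, hy', chebyshevUCoeff]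
    norm_num [map_ofNat, Nat.choose] <;> ring

lemma chebyshevUCoeff_zero_pos (k : ℕ) : 0 < chebyshevUCoeff k 0 := by
  simp [chebyshevUCoeff]

def chebyshevUSum (k : ℕ) (s : Finset (Fin 4 → ℝ)) : ℝ :=
  ∑ x ∈ s, ∑ y ∈ s, (Polynomial.Chebyshev.U ℝ k).eval (dotp x y)

theorem chebyshevUSum_nonneg {k : ℕ} (hk : k ∈ ({10, 4, 2} : Set ℕ))
    {s : Finset (Fin 4 → ℝ)} (hs : ∀ x ∈ s, dotp x x = 1) : 0 ≤ chebyshevUSum k s := by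
  simpa only [chebyshevUSum, zonalProfile_chebyshevUCoeff hk] using sum_sum_zonalProfile_nonneg
    (chebyshevUCoeff_zero_pos k) (fun y hy => isHarmonic_zonal_chebyshevUCoeff hk hy) hs

theorem chebyshevUSum_eq_zero_iff {k : ℕ} (hk : k ∈ ({10, 4, 2} : Set ℕ))
    {s : Finset (Fin 4 → ℝ)} (hs : ∀ x ∈ s, dotp x x = 1) :
    chebyshevUSum k s = 0 ↔
      ∀ P : MvPolynomial (Fin 4) ℝ, P.IsHomogeneous k → IsHarmonic P → ∑ x ∈ s, eval x P = 0 := by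
  simpa only [chebyshevUSum, zonalProfile_chebyshevUCoeff hk] using sum_sum_zonalProfile_eq_zero_iff
    (chebyshevUCoeff_zero_pos k) (fun y hy => isHarmonic_zonal_chebyshevUCoeff hk hy) hs

def lpPolynomial (t : ℝ) : ℝ :=
  16 + 30 * (Polynomial.Chebyshev.U ℝ 2).eval t + 15 * (Polynomial.Chebyshev.U ℝ 4).eval t +
    (Polynomial.Chebyshev.U ℝ 10).eval t

lemma lpPolynomial_eq (t : ℝ) :
    lpPolynomial t = 1024 * t ^ 4 * (t ^ 2 - 1 / 4) * ((t ^ 2 - 1) ^ 2 + 1 / 4) := by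
  simp only [lpPolynomial, Polynomial.Chebyshev.U_two, eval_chebyshevU_four, eval_chebyshevU_ten,
    Polynomial.eval_sub, Polynomial.eval_mul, Polynomial.eval_ofNat, Polynomial.eval_pow,
    Polynomial.eval_X, Polynomial.eval_one]
  ring

lemma lpPolynomial_one : lpPolynomial 1 = 192 := by
  norm_num [lpPolynomial_eq]

lemma lpPolynomial_nonpos {t : ℝ} (ht : t ∈ Set.Icc (-(1 / 2)) (1 / 2)) : lpPolynomial t ≤ 0 := by
  have h : t ^ 2 - 1 / 4 ≤ 0 := by nlinarith [ht.1, ht.2]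
  rw [lpPolynomial_eq]
  exact mul_nonpos_of_nonpos_of_nonneg (mul_nonpos_of_nonneg_of_nonpos (by positivity) h)
    (by positivity)

lemma lpPolynomial_eq_zero_iff {t : ℝ} :
    lpPolynomial t = 0 ↔ t ∈ ({-1 / 2, 0, 1 / 2} : Set ℝ) := by
  have h : (t ^ 2 - 1) ^ 2 + 1 / 4 ≠ 0 := by positivity
  have h' : t ^ 2 - 1 / 4 = (t - 1 / 2) * (t + 1 / 2) := by ring
  simp only [lpPolynomial_eq, mul_eq_zero, h, or_false, h', sub_eq_zero,
    add_eq_zero_iff_eq_neg, Set.mem_insert_iff, Set.mem_singleton_iff]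
  norm_num
  tauto

lemma sum_sum_lpPolynomial (s : Finset (Fin 4 → ℝ)) :
    ∑ x ∈ s, ∑ y ∈ s, lpPolynomial (dotp x y) =
      16 * s.card ^ 2 +
        (30 * chebyshevUSum 2 s + 15 * chebyshevUSum 4 s + chebyshevUSum 10 s) := by
  simp only [lpPolynomial, chebyshevUSum, sum_add_distrib, ← mul_sum, sum_const, nsmul_eq_mul,
    Nat.cast_ofNat]
  ring

lemma sum_sum_lpPolynomial_of_sphere {s : Finset (Fin 4 → ℝ)} (hs : ∀ x ∈ s, dotp x x = 1) :
    ∑ x ∈ s, ∑ y ∈ s, lpPolynomial (dotp x y) =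
      192 * s.card + ∑ x ∈ s, ∑ y ∈ s.erase x, lpPolynomial (dotp x y) := by
  rw [sum_sum_eq_sum_add_sum_sum_erase, sum_congr rfl fun x hx => by rw [hs x hx, lpPolynomial_one],
    sum_const, nsmul_eq_mul, mul_comm]

theorem card_le_twelve_and_card_eq_twelve_iff {s : Finset (Fin 4 → ℝ)} (hne : s.Nonempty)
    (hs : ∀ x ∈ s, dotp x x = 1)
    (hcode : ∀ x ∈ s, ∀ y ∈ s, x ≠ y → dotp x y ∈ Set.Icc (-(1 / 2) : ℝ) (1 / 2)) :
    s.card ≤ 12 ∧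
      (s.card = 12 ↔
        (∀ k ∈ ({10, 4, 2} : Set ℕ), ∀ P : MvPolynomial (Fin 4) ℝ, P.IsHomogeneous k →
          IsHarmonic P → ∑ x ∈ s, eval x P = 0) ∧
        ∀ x ∈ s, ∀ y ∈ s, x ≠ y → dotp x y ∈ ({-1 / 2, 0, 1 / 2} : Set ℝ)) := by
  set off := ∑ x ∈ s, ∑ y ∈ s.erase x, lpPolynomial (dotp x y)
  have hoff : ∀ x ∈ s, ∀ y ∈ s, x ≠ y → lpPolynomial (dotp x y) ≤ 0 :=
    fun x hx y hy hxy => lpPolynomial_nonpos (hcode x hx y hy hxy)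
  have hoff_nonpos : off ≤ 0 := sum_nonpos fun x hx => sum_nonpos fun y hy =>
    hoff x hx y (mem_of_mem_erase hy) (ne_of_mem_erase hy).symm
  have key : 16 * (s.card : ℝ) ^ 2 +
      (30 * chebyshevUSum 2 s + 15 * chebyshevUSum 4 s + chebyshevUSum 10 s) =
        192 * s.card + off :=
    (sum_sum_lpPolynomial s).symm.trans (sum_sum_lpPolynomial_of_sphere hs)
  have hnonneg (k : ℕ) (hk : k ∈ ({10, 4, 2} : Set ℕ)) := chebyshevUSum_nonneg hk hs
  have h2 := hnonneg 2 (by simp)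
  have h4 := hnonneg 4 (by simp)
  have h10 := hnonneg 10 (by simp)
  have hcard : (1 : ℝ) ≤ s.card := by exact_mod_cast hne.card_pos
  refine ⟨by exact_mod_cast (show (s.card : ℝ) ≤ 12 by nlinarith), fun h12 => ?_, ?_⟩
  · rw [show (s.card : ℝ) = 12 by exact_mod_cast h12] at key
    have hzero : ∀ k ∈ ({10, 4, 2} : Set ℕ), chebyshevUSum k s = 0 := by
      rintro k (rfl | rfl | rfl) <;> linarith
    have hoff_zero : off = 0 := by linarith
    exact ⟨fun k hk => (chebyshevUSum_eq_zero_iff hk hs).mp (hzero k hk),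
      fun x hx y hy hxy => lpPolynomial_eq_zero_iff.mp
        ((sum_sum_erase_eq_zero_iff hoff).mp hoff_zero x hx y hy hxy)⟩
  · rintro ⟨hdesign, hangles⟩
    have hzero (k : ℕ) (hk : k ∈ ({10, 4, 2} : Set ℕ)) : chebyshevUSum k s = 0 :=
      (chebyshevUSum_eq_zero_iff hk hs).mpr (hdesign k hk)
    have hoff_zero : off = 0 := (sum_sum_erase_eq_zero_iff hoff).mpr
      fun x hx y hy hxy => lpPolynomial_eq_zero_iff.mpr (hangles x hx y hy hxy)
    rw [hzero 2 (by simp), hzero 4 (by simp), hzero 10 (by simp), hoff_zero] at key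
    exact_mod_cast (show (s.card : ℝ) = 12 by nlinarith)

theorem stmt_1 (X : Set (Fin 4 → ℝ)) (hfin : X.Finite) (hne : X.Nonempty)
    (hsph : ∀ x ∈ X, dotp x x = 1)
    (hcode : ∀ x ∈ X, ∀ y ∈ X, x ≠ y → dotp x y ∈ Set.Icc (-(1/2) : ℝ) (1/2)) :
    X.ncard ≤ 12 ∧
      (X.ncard = 12 ↔
        IsSphDesign {10, 4, 2} X ∧
          ∀ x ∈ X, ∀ y ∈ X, x ≠ y → dotp x y ∈ ({-1/2, 0, 1/2} : Set ℝ)) := by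
  have hmem (x : Fin 4 → ℝ) : x ∈ hfin.toFinset ↔ x ∈ X := hfin.mem_toFinset
  simp only [IsSphDesign, finsum_mem_eq_finite_toFinset_sum _ hfin,
    Set.ncard_eq_toFinset_card X hfin]
  simpa only [hmem] using card_le_twelve_and_card_eq_twelve_iff (s := hfin.toFinset)
    (by simpa using hne) (by simpa only [hmem]) (by simpa only [hmem])
end
end

section
/- Let X be an antipodal spherical {10,4,2}-design on S³ with exactly 24 points. Then A(X) ⊆ {−1, −1/2, 0, 1/2}, and for every y ∈ X the distance distribution is: exactly 1 point x ∈ X satisfies ⟨x,y⟩ = −1, exactly 8 points satisfy ⟨x,y⟩ = −1/2, exactly 6 points satisfy ⟨x,y⟩ = 0, and exactly 8 points satisfy ⟨x,y⟩ = 1/2. -/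
noncomputable section

open MvPolynomial

def Lf (y : Fin 4 → ℝ) : MvPolynomial (Fin 4) ℝ := ∑ i, C (y i) * X i
def Qf : MvPolynomial (Fin 4) ℝ := ∑ i : Fin 4, X i ^ 2

def lap_s7 (P : MvPolynomial (Fin 4) ℝ) : MvPolynomial (Fin 4) ℝ :=
  ∑ i, pderiv i (pderiv i P)

lemma pderiv_Lf (y : Fin 4 → ℝ) (j : Fin 4) : pderiv j (Lf y) = C (y j) := by
  simp [Lf, pderiv_X, Pi.single_apply]

lemma pderiv_Qf (j : Fin 4) : pderiv j Qf = 2 * X j := by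
  simp [Qf, pderiv_pow, pderiv_X, Pi.single_apply]

lemma pderiv_Lf_pow (y : Fin 4 → ℝ) (n : ℕ) (j : Fin 4) :
    pderiv j ((Lf y) ^ n) = C ((n : ℝ) * y j) * (Lf y) ^ (n - 1) := by
  rw [pderiv_pow, pderiv_Lf]
  rw [show ((n : MvPolynomial (Fin 4) ℝ)) = C (n : ℝ) by simp]
  rw [map_mul]; ring

lemma pderiv_Qf_pow (n : ℕ) (j : Fin 4) :
    pderiv j (Qf ^ n) = C (2 * (n : ℝ)) * X j * Qf ^ (n - 1) := by
  rw [pderiv_pow, pderiv_Qf]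
  rw [show ((n : MvPolynomial (Fin 4) ℝ)) = C (n : ℝ) by simp]
  rw [map_mul, show (2 : MvPolynomial (Fin 4) ℝ) = C 2 from (map_ofNat C 2).symm]; ring

lemma sumC2 (y : Fin 4 → ℝ) (hy : ∑ i, y i ^ 2 = 1) :
    ∑ i : Fin 4, (C (y i) : MvPolynomial (Fin 4) ℝ) * C (y i) = 1 := by
  have : ∀ i : Fin 4, (C (y i) : MvPolynomial (Fin 4) ℝ) * C (y i) = C (y i ^ 2) := by
    intro i; rw [map_pow]; ring
  rw [Finset.sum_congr rfl fun i _ => this i, ← map_sum, hy, map_one]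

lemma lap_Lf_pow (y : Fin 4 → ℝ) (hy : ∑ i, y i ^ 2 = 1) (n : ℕ) :
    lap_s7 ((Lf y) ^ n) = C ((n : ℝ) * ((n - 1 : ℕ) : ℝ)) * (Lf y) ^ (n - 2) := by
  unfold lap_s7
  simp only [pderiv_Lf_pow, pderiv_C_mul, pderiv_Lf_pow]
  have : ∀ j : Fin 4, C ((n:ℝ) * y j) * (C (((n-1:ℕ):ℝ) * y j) * Lf y ^ (n-1-1))
      = (C ((n:ℝ) * ((n-1:ℕ):ℝ)) * (Lf y) ^ (n - 2)) * (C (y j) * C (y j)) := by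
    intro j
    rw [Nat.sub_sub]
    simp only [map_mul]
    ring
  rw [Finset.sum_congr rfl (fun j _ => this j), ← Finset.mul_sum, sumC2 y hy, mul_one]

lemma lap_Qf_pow (n : ℕ) :
    lap_s7 (Qf ^ n) = C (4 * (n : ℝ) * ((n - 1 : ℕ) : ℝ)) * Qf ^ (n - 2) * Qf
      + C (8 * (n : ℝ)) * Qf ^ (n - 1) := by
  unfold lap_s7
  have key : ∀ j : Fin 4, pderiv j (pderiv j (Qf ^ n))
      = (C (2 * (n:ℝ) * (2 * ((n-1:ℕ):ℝ))) * Qf ^ (n-2)) * X j ^ 2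
        + C (2 * (n:ℝ)) * Qf ^ (n-1) := by
    intro j
    rw [pderiv_Qf_pow, pderiv_mul, pderiv_mul, pderiv_C, pderiv_X_self, pderiv_Qf_pow,
      Nat.sub_sub]
    simp only [map_mul]
    ring
  rw [Finset.sum_congr rfl (fun j _ => key j), Finset.sum_add_distrib,
    ← Finset.mul_sum, ← Qf, Finset.sum_const]
  simp only [map_mul, map_ofNat, Finset.card_univ, Fintype.card_fin]
  ring

lemma lap_cross (y : Fin 4 → ℝ) (m k : ℕ) :
    ∑ j : Fin 4, pderiv j ((Lf y) ^ m) * pderiv j (Qf ^ k)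
      = C (2 * (m : ℝ) * (k : ℝ)) * (Lf y) ^ (m - 1) * Qf ^ (k - 1) * Lf y := by
  simp only [pderiv_Lf_pow, pderiv_Qf_pow]
  have : ∀ j : Fin 4, C ((m:ℝ) * y j) * Lf y ^ (m-1) * (C (2*(k:ℝ)) * X j * Qf ^ (k-1))
      = (C (2 * (m:ℝ) * (k:ℝ)) * (Lf y) ^ (m-1) * Qf ^ (k-1)) * (C (y j) * X j) := by
    intro j; simp only [map_mul]; ring
  rw [Finset.sum_congr rfl (fun j _ => this j), ← Finset.mul_sum, ← Lf]

lemma lap_mul' (p q : MvPolynomial (Fin 4) ℝ) :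
    lap_s7 (p * q) = p * lap_s7 q + q * lap_s7 p + 2 * ∑ j : Fin 4, pderiv j p * pderiv j q := by
  unfold lap_s7
  have key : ∀ j : Fin 4, pderiv j (pderiv j (p * q))
      = pderiv j (pderiv j p) * q + p * pderiv j (pderiv j q)
        + 2 * (pderiv j p * pderiv j q) := by
    intro j; simp only [pderiv_mul, map_add]; ring
  rw [Finset.sum_congr rfl (fun j _ => key j), Finset.sum_add_distrib, Finset.sum_add_distrib,
    ← Finset.sum_mul, ← Finset.mul_sum, ← Finset.mul_sum]
  ring

lemma lap_add (p q : MvPolynomial (Fin 4) ℝ) : lap_s7 (p + q) = lap_s7 p + lap_s7 q := by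
  unfold lap_s7; simp [Finset.sum_add_distrib]

lemma lap_C_mul (a : ℝ) (p : MvPolynomial (Fin 4) ℝ) : lap_s7 (C a * p) = C a * lap_s7 p := by
  unfold lap_s7; simp [pderiv_C_mul, Finset.mul_sum]

lemma lap_LQ (y : Fin 4 → ℝ) (hy : ∑ i, y i ^ 2 = 1) (a b : ℕ) :
    lap_s7 ((Lf y) ^ a * Qf ^ b) =
      C ((a:ℝ) * ((a-1:ℕ):ℝ)) * (Lf y) ^ (a-2) * Qf ^ b
      + (Lf y) ^ a * (C (4*(b:ℝ)*((b-1:ℕ):ℝ)) * Qf ^ (b-2) * Qf + C (8*(b:ℝ)) * Qf ^ (b-1))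
      + C (4*(a:ℝ)*(b:ℝ)) * (Lf y) ^ (a-1) * Lf y * Qf ^ (b-1) := by
  rw [lap_mul', lap_Lf_pow y hy, lap_Qf_pow, lap_cross]
  simp only [map_mul, map_ofNat]
  ring

def P2 (y : Fin 4 → ℝ) : MvPolynomial (Fin 4) ℝ :=
  C 4 * ((Lf y) ^ 2 * Qf ^ 0) + C (-1) * ((Lf y) ^ 0 * Qf ^ 1)

def P4 (y : Fin 4 → ℝ) : MvPolynomial (Fin 4) ℝ :=
  C 16 * ((Lf y) ^ 4 * Qf ^ 0) + C (-12) * ((Lf y) ^ 2 * Qf ^ 1) + C 1 * ((Lf y) ^ 0 * Qf ^ 2)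

def P10 (y : Fin 4 → ℝ) : MvPolynomial (Fin 4) ℝ :=
  C 1024 * ((Lf y) ^ 10 * Qf ^ 0) + C (-2304) * ((Lf y) ^ 8 * Qf ^ 1)
  + C 1792 * ((Lf y) ^ 6 * Qf ^ 2) + C (-560) * ((Lf y) ^ 4 * Qf ^ 3)
  + C 60 * ((Lf y) ^ 2 * Qf ^ 4) + C (-1) * ((Lf y) ^ 0 * Qf ^ 5)

lemma lap_P2 (y : Fin 4 → ℝ) (hy : ∑ i, y i ^ 2 = 1) : lap_s7 (P2 y) = 0 := by
  unfold P2
  rw [lap_add, lap_C_mul, lap_C_mul, lap_LQ y hy, lap_LQ y hy]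
  norm_num
  simp only [map_neg, map_ofNat, map_one]
  ring

lemma lap_P4 (y : Fin 4 → ℝ) (hy : ∑ i, y i ^ 2 = 1) : lap_s7 (P4 y) = 0 := by
  unfold P4
  rw [lap_add, lap_add, lap_C_mul, lap_C_mul, lap_C_mul,
    lap_LQ y hy, lap_LQ y hy, lap_LQ y hy]
  norm_num
  simp only [map_neg, map_ofNat, map_one]
  ring

lemma lap_P10 (y : Fin 4 → ℝ) (hy : ∑ i, y i ^ 2 = 1) : lap_s7 (P10 y) = 0 := by
  unfold P10
  rw [lap_add, lap_add, lap_add, lap_add, lap_add, lap_C_mul, lap_C_mul, lap_C_mul,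
    lap_C_mul, lap_C_mul, lap_C_mul, lap_LQ y hy, lap_LQ y hy, lap_LQ y hy,
    lap_LQ y hy, lap_LQ y hy, lap_LQ y hy]
  norm_num
  simp only [map_neg, map_ofNat, map_one]
  ring

lemma homog_Lf (y : Fin 4 → ℝ) : (Lf y).IsHomogeneous 1 :=
  MvPolynomial.IsHomogeneous.sum _ _ _ fun i _ => (isHomogeneous_X ℝ i).C_mul (y i)

lemma homog_Qf : (Qf : MvPolynomial (Fin 4) ℝ).IsHomogeneous 2 :=
  MvPolynomial.IsHomogeneous.sum _ _ _ fun i _ => by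
    simpa using (isHomogeneous_X ℝ i).pow 2

lemma homog_LQ (y : Fin 4 → ℝ) (c : ℝ) (a b n : ℕ) (h : a + 2 * b = n) :
    (C c * ((Lf y) ^ a * Qf ^ b)).IsHomogeneous n := by
  have := (((homog_Lf y).pow a).mul (homog_Qf.pow b)).C_mul c
  simpa [h.symm, mul_comm] using this

lemma eval_Lf (x y : Fin 4 → ℝ) : eval x (Lf y) = dotp x y := by
  simp [Lf, dotp, mul_comm]

lemma eval_Qf (x : Fin 4 → ℝ) : eval x Qf = dotp x x := by
  simp [Qf, dotp, pow_two]

lemma evalP2 (x y : Fin 4 → ℝ) (hx : dotp x x = 1) :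
    MvPolynomial.eval x (P2 y) = 4 * (dotp x y) ^ 2 - 1 := by
  simp [P2, eval_Lf, eval_Qf, hx]; ring

lemma evalP4 (x y : Fin 4 → ℝ) (hx : dotp x x = 1) :
    MvPolynomial.eval x (P4 y) = 16 * (dotp x y) ^ 4 - 12 * (dotp x y) ^ 2 + 1 := by
  simp [P4, eval_Lf, eval_Qf, hx]; ring

lemma evalP10 (x y : Fin 4 → ℝ) (hx : dotp x x = 1) :
    MvPolynomial.eval x (P10 y) = 1024 * (dotp x y) ^ 10 - 2304 * (dotp x y) ^ 8
      + 1792 * (dotp x y) ^ 6 - 560 * (dotp x y) ^ 4 + 60 * (dotp x y) ^ 2 - 1 := by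
  simp [P10, eval_Lf, eval_Qf, hx]; ring

lemma homog_P2 (y : Fin 4 → ℝ) : (P2 y).IsHomogeneous 2 :=
  (homog_LQ y 4 2 0 2 rfl).add (homog_LQ y (-1) 0 1 2 rfl)

lemma homog_P4 (y : Fin 4 → ℝ) : (P4 y).IsHomogeneous 4 :=
  ((homog_LQ y 16 4 0 4 rfl).add (homog_LQ y (-12) 2 1 4 rfl)).add (homog_LQ y 1 0 2 4 rfl)

lemma homog_P10 (y : Fin 4 → ℝ) : (P10 y).IsHomogeneous 10 :=
  (((((homog_LQ y 1024 10 0 10 rfl).add (homog_LQ y (-2304) 8 1 10 rfl)).add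
    (homog_LQ y 1792 6 2 10 rfl)).add (homog_LQ y (-560) 4 3 10 rfl)).add
    (homog_LQ y 60 2 4 10 rfl)).add (homog_LQ y (-1) 0 5 10 rfl)

lemma unit_sq (y : Fin 4 → ℝ) (h : dotp y y = 1) : ∑ i, y i ^ 2 = 1 := by
  simpa [dotp, pow_two] using h

lemma dotp_neg_left (x y : Fin 4 → ℝ) : dotp (-x) y = -dotp x y := by
  simp [dotp, Finset.sum_neg_distrib]

lemma dotp_eq_one (x y : Fin 4 → ℝ) (hx : dotp x x = 1) (hy : dotp y y = 1)
    (h : dotp x y = 1) : x = y := by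
  have hsum : ∑ i : Fin 4, (x i - y i) ^ 2 = 0 := by
    have expand : ∀ i : Fin 4, (x i - y i) ^ 2 = x i * x i - 2 * (x i * y i) + y i * y i :=
      fun i => by ring
    rw [Finset.sum_congr rfl fun i _ => expand i, Finset.sum_add_distrib,
      Finset.sum_sub_distrib, ← Finset.mul_sum]
    have : ∑ i : Fin 4, x i * y i = 1 := h
    rw [this, show ∑ i : Fin 4, x i * x i = 1 from hx, show ∑ i : Fin 4, y i * y i = 1 from hy]
    ring
  funext i
  have h1 : ∀ i ∈ Finset.univ, (0:ℝ) ≤ (x i - y i)^2 := fun i _ => sq_nonneg _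
  have := (Finset.sum_eq_zero_iff_of_nonneg h1).mp hsum i (Finset.mem_univ i)
  have := pow_eq_zero_iff (n := 2) (by norm_num) |>.mp this
  linarith [sub_eq_zero.mp this]

lemma key_values (X : Set (Fin 4 → ℝ)) (hfin : X.Finite)
    (hsph : ∀ x ∈ X, dotp x x = 1) (hanti : -X = X)
    (hdes : IsSphDesign {10, 4, 2} X) (hcard : X.ncard = 24)
    (y : Fin 4 → ℝ) (hy : y ∈ X) :
    ∀ x ∈ X, x ≠ y → x ≠ -y →
      dotp x y = 0 ∨ dotp x y = 1/2 ∨ dotp x y = -1/2 := by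
  classical
  set s := hfin.toFinset with hs
  have hmem : ∀ z, z ∈ s ↔ z ∈ X := fun z => hfin.mem_toFinset
  have hy2 := unit_sq y (hsph y hy)
  have hsum : ∀ ℓ ∈ ({10,4,2} : Set ℕ), ∀ P : MvPolynomial (Fin 4) ℝ,
      P.IsHomogeneous ℓ → lap_s7 P = 0 → ∑ x ∈ s, MvPolynomial.eval x P = 0 := by
    intro ℓ hℓ P h1 h2
    have := hdes ℓ hℓ P h1 h2
    rwa [← hfin.coe_toFinset, finsum_mem_coe_finset] at this
  have E2 : ∑ x ∈ s, (4*(dotp x y)^2 - 1) = 0 := by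
    have h := hsum 2 (by simp) (P2 y) (homog_P2 y) (lap_P2 y hy2)
    rw [← h]
    exact Finset.sum_congr rfl fun x hx => (evalP2 x y (hsph x ((hmem x).mp hx))).symm
  have E4 : ∑ x ∈ s, (16*(dotp x y)^4 - 12*(dotp x y)^2 + 1) = 0 := by
    have h := hsum 4 (by simp) (P4 y) (homog_P4 y) (lap_P4 y hy2)
    rw [← h]
    exact Finset.sum_congr rfl fun x hx => (evalP4 x y (hsph x ((hmem x).mp hx))).symm
  have E10 : ∑ x ∈ s, (1024*(dotp x y)^10 - 2304*(dotp x y)^8 + 1792*(dotp x y)^6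
      - 560*(dotp x y)^4 + 60*(dotp x y)^2 - 1) = 0 := by
    have h := hsum 10 (by simp) (P10 y) (homog_P10 y) (lap_P10 y hy2)
    rw [← h]
    exact Finset.sum_congr rfl fun x hx => (evalP10 x y (hsph x ((hmem x).mp hx))).symm
  have hcards : s.card = 24 := by
    rw [← Set.ncard_eq_toFinset_card X hfin]; exact hcard
  have hyS : y ∈ s := (hmem y).mpr hy
  have hnyX : -y ∈ X := by
    have h1 : -y ∈ -X := by rw [Set.mem_neg]; simpa using hy
    rwa [hanti] at h1
  have hnyS : -y ∈ s := (hmem _).mpr hnyX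
  have hyny : -y ≠ y := by
    intro h
    have h1 := hsph y hy
    have h2 : dotp (-y) y = -1 := by rw [dotp_neg_left, h1]
    rw [h, h1] at h2
    linarith
  set g : (Fin 4 → ℝ) → ℝ := fun x => 1024*(dotp x y)^10 - 2304*(dotp x y)^8
    + 1792*(dotp x y)^6 - 528*(dotp x y)^4 + 52*(dotp x y)^2 with hg
  have hgsum : ∑ x ∈ s, g x = 72 := by
    have hpt : ∀ x, g x = (1024*(dotp x y)^10 - 2304*(dotp x y)^8 + 1792*(dotp x y)^6
        - 560*(dotp x y)^4 + 60*(dotp x y)^2 - 1)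
        + 2*(16*(dotp x y)^4 - 12*(dotp x y)^2 + 1) + (4*(4*(dotp x y)^2 - 1) + 3) := by
      intro x; simp only [hg]; ring
    rw [Finset.sum_congr rfl fun x _ => hpt x, Finset.sum_add_distrib,
      Finset.sum_add_distrib, Finset.sum_add_distrib, E10, ← Finset.mul_sum, E4,
      ← Finset.mul_sum, E2, Finset.sum_const, hcards]
    norm_num
  have hg1 : g y = 36 := by
    simp only [hg, hsph y hy]; norm_num
  have hgm1 : g (-y) = 36 := by
    simp only [hg, dotp_neg_left, hsph y hy]; norm_num
  have hny_in : -y ∈ s.erase y := Finset.mem_erase.mpr ⟨hyny, hnyS⟩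
  have h1 : ∑ x ∈ s.erase y, g x = 36 := by
    have := Finset.add_sum_erase s g hyS
    rw [hgsum, hg1] at this
    linarith
  have h2 : ∑ x ∈ (s.erase y).erase (-y), g x = 0 := by
    have := Finset.add_sum_erase (s.erase y) g hny_in
    rw [h1, hgm1] at this
    linarith
  have hnn : ∀ x ∈ (s.erase y).erase (-y), 0 ≤ g x := by
    intro x _
    have hfac : g x = ((dotp x y)^2 * (4*(dotp x y)^2 - 1)^2)
        * ((8*(dotp x y)^2 - 7)^2 + 3) := by simp only [hg]; ring
    rw [hfac]; positivity
  have hzero := (Finset.sum_eq_zero_iff_of_nonneg hnn).mp h2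
  intro x hx hxy hxny
  have hxs : x ∈ (s.erase y).erase (-y) :=
    Finset.mem_erase.mpr ⟨hxny, Finset.mem_erase.mpr ⟨hxy, (hmem x).mpr hx⟩⟩
  have h0 := hzero x hxs
  set t := dotp x y with ht
  have hfac : (t^2 * (4*t^2 - 1)^2) * ((8*t^2 - 7)^2 + 3) = 0 := by
    rw [← h0]; simp only [hg]; ring
  have hKpos : (0:ℝ) < (8*t^2 - 7)^2 + 3 := by positivity
  have hA : t^2 * (4*t^2 - 1)^2 = 0 := by
    rcases mul_eq_zero.mp hfac with h | h
    · exact h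
    · exact absurd h hKpos.ne'
  rcases mul_eq_zero.mp hA with h | h
  · left
    exact pow_eq_zero_iff (n := 2) (by norm_num) |>.mp h
  · have h4 : (2*t - 1) * (2*t + 1) = 0 := by
      have := pow_eq_zero_iff (n := 2) (by norm_num) |>.mp h
      nlinarith [this]
    rcases mul_eq_zero.mp h4 with h | h
    · right; left; linarith
    · right; right; linarith


theorem stmt_7 (X : Set (Fin 4 → ℝ)) (hfin : X.Finite)
    (hsph : ∀ x ∈ X, dotp x x = 1) (hanti : -X = X)
    (hdes : IsSphDesign {10, 4, 2} X) (hcard : X.ncard = 24) :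
    (∀ x ∈ X, ∀ y ∈ X, x ≠ y → dotp x y ∈ ({-1, -1/2, 0, 1/2} : Set ℝ)) ∧
    ∀ y ∈ X,
      {x ∈ X | dotp x y = -1}.ncard = 1 ∧
      {x ∈ X | dotp x y = -1/2}.ncard = 8 ∧
      {x ∈ X | dotp x y = 0}.ncard = 6 ∧
      {x ∈ X | dotp x y = 1/2}.ncard = 8 := by
  classical
  have hnegX : ∀ z ∈ X, -z ∈ X := by
    intro z hz
    have h1 : -z ∈ -X := by rw [Set.mem_neg]; simpa using hz
    rwa [hanti] at h1
  constructor
  · intro x hx y hy hne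
    by_cases hxny : x = -y
    · subst hxny
      have : dotp (-y) y = -1 := by rw [dotp_neg_left, hsph y hy]
      rw [this]; simp
    · rcases key_values X hfin hsph hanti hdes hcard y hy x hx hne hxny with h | h | h <;>
        rw [h] <;> simp
  · intro y hy
    set s := hfin.toFinset with hsdef
    have hmem : ∀ z, z ∈ s ↔ z ∈ X := fun z => hfin.mem_toFinset
    have hy2 := unit_sq y (hsph y hy)
    have hcards : s.card = 24 := by
      rw [← Set.ncard_eq_toFinset_card X hfin]; exact hcard
    have hyS : y ∈ s := (hmem y).mpr hy
    have hnyX : -y ∈ X := hnegX y hy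
    have hnyS : -y ∈ s := (hmem _).mpr hnyX
    have hdotny : dotp (-y) y = -1 := by rw [dotp_neg_left, hsph y hy]
    have hyny : -y ≠ y := by
      intro h
      have h1 := hsph y hy
      rw [h, h1] at hdotny
      linarith
    -- the degree 2 design equation
    have E2 : ∑ x ∈ s, (4*(dotp x y)^2 - 1) = 0 := by
      have h := hdes 2 (by simp) (P2 y) (homog_P2 y) (lap_P2 y hy2)
      rw [← hfin.coe_toFinset, finsum_mem_coe_finset] at h
      rw [← h]
      exact Finset.sum_congr rfl fun x hx => (evalP2 x y (hsph x ((hmem x).mp hx))).symm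
    set F : ℝ → Finset (Fin 4 → ℝ) := fun c => s.filter (fun x => dotp x y = c) with hF
    have hset : ∀ c : ℝ, {x ∈ X | dotp x y = c}.ncard = (F c).card := by
      intro c
      have : {x ∈ X | dotp x y = c} = ↑(F c) := by
        ext z; simp [hF, hmem z, Set.mem_setOf_eq, Finset.mem_filter]
      rw [this, Set.ncard_coe_finset]
    have hdot1 : ∀ x ∈ X, dotp x y = 1 → x = y := fun x hx h =>
      dotp_eq_one x y (hsph x hx) (hsph y hy) h
    have hdotm1 : ∀ x ∈ X, dotp x y = -1 → x = -y := by
      intro x hx h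
      have hxx : dotp (-x) (-x) = 1 := by
        have := hsph x hx
        simpa [dotp, neg_mul_neg] using this
      have hnx : dotp (-x) y = 1 := by rw [dotp_neg_left, h]; ring
      have heq := dotp_eq_one (-x) y hxx (hsph y hy) hnx
      rw [← heq]; simp
    have hF1 : F 1 = {y} := by
      ext x
      simp only [hF, Finset.mem_filter, Finset.mem_singleton]
      constructor
      · rintro ⟨hxs, hd⟩; exact hdot1 x ((hmem x).mp hxs) hd
      · rintro rfl; exact ⟨hyS, hsph _ hy⟩
    have hFm1 : F (-1) = {-y} := by
      ext x
      simp only [hF, Finset.mem_filter, Finset.mem_singleton]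
      constructor
      · rintro ⟨hxs, hd⟩; exact hdotm1 x ((hmem x).mp hxs) hd
      · rintro rfl; exact ⟨hnyS, hdotny⟩
    have vals : ∀ x ∈ s, dotp x y = -1 ∨ dotp x y = -1/2 ∨ dotp x y = 0 ∨
        dotp x y = 1/2 ∨ dotp x y = 1 := by
      intro x hxs
      have hx := (hmem x).mp hxs
      by_cases h1 : x = y
      · subst h1; right; right; right; right; exact hsph x hx
      by_cases h2 : x = -y
      · subst h2; left; exact hdotny
      rcases key_values X hfin hsph hanti hdes hcard y hy x hx h1 h2 with h | h | h
      · right; right; left; exact h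
      · right; right; right; left; exact h
      · right; left; exact h
    -- indicator identity for E2
    have hE2' : (0:ℝ) = 3*((F 1).card:ℝ) + 3*((F (-1)).card:ℝ) - ((F 0).card:ℝ) := by
      have hind : ∀ x ∈ s, 4*(dotp x y)^2 - 1 =
          3*(if dotp x y = 1 then (1:ℝ) else 0) + 3*(if dotp x y = -1 then (1:ℝ) else 0)
          - (if dotp x y = 0 then (1:ℝ) else 0) := by
        intro x hxs
        rcases vals x hxs with h | h | h | h | h <;> rw [h] <;> norm_num
      have h := E2
      rw [Finset.sum_congr rfl hind, Finset.sum_sub_distrib, Finset.sum_add_distrib,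
        ← Finset.mul_sum, ← Finset.mul_sum, Finset.sum_boole, Finset.sum_boole,
        Finset.sum_boole] at h
      exact h.symm
    have htot : (24:ℝ) = ((F (-1)).card:ℝ) + ((F (-1/2)).card:ℝ) + ((F 0).card:ℝ)
        + ((F (1/2)).card:ℝ) + ((F 1).card:ℝ) := by
      have hind : ∀ x ∈ s, (1:ℝ) =
          (if dotp x y = -1 then (1:ℝ) else 0) + (if dotp x y = -1/2 then (1:ℝ) else 0)
          + (if dotp x y = 0 then (1:ℝ) else 0) + (if dotp x y = 1/2 then (1:ℝ) else 0)
          + (if dotp x y = 1 then (1:ℝ) else 0) := by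
        intro x hxs
        rcases vals x hxs with h | h | h | h | h <;> rw [h] <;> norm_num
      have h24 : ∑ _x ∈ s, (1:ℝ) = 24 := by
        rw [Finset.sum_const, hcards]; norm_num
      rw [Finset.sum_congr rfl hind, Finset.sum_add_distrib, Finset.sum_add_distrib,
        Finset.sum_add_distrib, Finset.sum_add_distrib, Finset.sum_boole, Finset.sum_boole,
        Finset.sum_boole, Finset.sum_boole, Finset.sum_boole] at h24
      exact h24.symm
    have hbij : (F (1/2)).card = (F (-1/2)).card := by
      apply Finset.card_bij (fun x _ => -x)
      · intro a ha
        rw [hF, Finset.mem_filter] at ha ⊢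
        exact ⟨(hmem _).mpr (hnegX a ((hmem a).mp ha.1)), by rw [dotp_neg_left, ha.2]; norm_num⟩
      · intro a _ b _ h
        simpa using congrArg Neg.neg h
      · intro b hb
        rw [hF, Finset.mem_filter] at hb
        refine ⟨-b, ?_, by simp⟩
        rw [hF, Finset.mem_filter]
        exact ⟨(hmem _).mpr (hnegX b ((hmem b).mp hb.1)), by rw [dotp_neg_left, hb.2]; norm_num⟩
    have hc1 : (F 1).card = 1 := by rw [hF1]; rfl
    have hcm1 : (F (-1)).card = 1 := by rw [hFm1]; rfl
    have hc0 : (F 0).card = 6 := by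
      have : ((F 0).card : ℝ) = 6 := by rw [hc1, hcm1] at hE2'; push_cast at hE2' ⊢; linarith
      exact_mod_cast this
    have hchalf : (F (1/2)).card = 8 := by
      have : ((F (1/2)).card : ℝ) = 8 := by
        rw [hc1, hcm1, hc0, ← hbij] at htot; push_cast at htot ⊢; linarith
      exact_mod_cast this
    have hcmhalf : (F (-1/2)).card = 8 := by rw [← hbij]; exact hchalf
    exact ⟨by rw [hset (-1)]; exact hcm1, by rw [hset (-1/2)]; exact hcmhalf,
      by rw [hset 0]; exact hc0, by rw [hset (1/2)]; exact hchalf⟩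
end
end
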